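/- Let E be a complex Banach space, a ≤ b real numbers, and F : ℂ → E holomorphic on ℂ ∖ [a,b] and slowly increasing. Let (c_k)_{k≥0} be a sequence of complex numbers of exponential type 0 and let P(z) := Σ_{k≥0} (c_k/k!)·z^k be the associated entire function. Then the pointwise product z ↦ P(z)·F(z) is holomorphic on ℂ ∖ [a,b] and slowly increasing, and for every integer n ≥ 1 there exists a constant C > 0, depending only on n and on the sequence (c_k), such that ⦀P·F⦀_n ≤ C·⦀F⦀_{2n}. -/

import Mathlib

noncomputable section

/-- The segment `[a,b] = {x + 0i : a ≤ x ≤ b}` in `ℂ`. -/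
def seg (a b : ℝ) : Set ℂ := (fun x : ℝ => (x : ℂ)) '' Set.Icc a b

/-- The exterior region `S_n([a,b]) = {z : |Im z| < n, dist(z,[a,b]) > 1/n}`. -/
def Sreg (a b : ℝ) (n : ℕ) : Set ℂ :=
  {z : ℂ | |z.im| < (n : ℝ) ∧ 1 / (n : ℝ) < Metric.infDist z (seg a b)}

/-- The weighted sup-norm `⦀F⦀_n = sup_{z ∈ S_n([a,b])} ‖F z‖ e^{−|Re z|/n}`. -/
def wnorm {E : Type*} [NormedAddCommGroup E] (a b : ℝ) (n : ℕ) (F : ℂ → E) : ℝ :=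
  sSup ((fun z => ‖F z‖ * Real.exp (-|z.re| / n)) '' Sreg a b n)

/-- `F` is holomorphic on `ℂ ∖ [a,b]` and slowly increasing: each weighted sup-norm
`⦀F⦀_n` is finite. -/
def SlowlyIncreasing {E : Type*} [NormedAddCommGroup E] [NormedSpace ℂ E]
    (a b : ℝ) (F : ℂ → E) : Prop :=
  DifferentiableOn ℂ F (seg a b)ᶜ ∧
    ∀ n : ℕ, 1 ≤ n →
      BddAbove ((fun z => ‖F z‖ * Real.exp (-|z.re| / n)) '' Sreg a b n)

/-- A sequence of complex numbers of exponential type `0`. -/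
def ExpTypeZero (c : ℕ → ℂ) : Prop :=
  ∀ ε : ℝ, 0 < ε → ∃ C : ℝ, 0 < C ∧ ∀ k : ℕ, ‖c k‖ ≤ C * ε ^ k

lemma Pnorm_le (c : ℕ → ℂ) {ε C : ℝ} (hε : 0 < ε) (hC : 0 < C)
    (h : ∀ k : ℕ, ‖c k‖ ≤ C * ε ^ k) (z : ℂ) :
    ‖∑' k : ℕ, c k / (Nat.factorial k : ℂ) * z ^ k‖ ≤ C * Real.exp (ε * ‖z‖) := by
  have hterm : ∀ k : ℕ, ‖c k / (Nat.factorial k : ℂ) * z ^ k‖ ≤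
      C * (ε * ‖z‖) ^ k / (Nat.factorial k : ℝ) := by
    intro k
    have h1 : ‖c k‖ ≤ C * ε ^ k := by exact h k
    have hfac : (0 : ℝ) < (Nat.factorial k : ℝ) := by positivity
    rw [norm_mul, norm_div, norm_pow, Complex.norm_natCast]
    calc ‖c k‖ / (Nat.factorial k : ℝ) * ‖z‖ ^ k
        ≤ (C * ε ^ k) / (Nat.factorial k : ℝ) * ‖z‖ ^ k := by gcongr
      _ = C * (ε * ‖z‖) ^ k / (Nat.factorial k : ℝ) := by rw [mul_pow]; ring
  have hsum : Summable fun k : ℕ => C * (ε * ‖z‖) ^ k / (Nat.factorial k : ℝ) := by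
    have := (Real.summable_pow_div_factorial (ε * ‖z‖)).mul_left C
    simpa [mul_div_assoc] using this
  calc ‖∑' k : ℕ, c k / (Nat.factorial k : ℂ) * z ^ k‖
      ≤ ∑' k : ℕ, ‖c k / (Nat.factorial k : ℂ) * z ^ k‖ := by
        exact norm_tsum_le_tsum_norm
          (Summable.of_nonneg_of_le (fun k => norm_nonneg _) hterm hsum)
    _ ≤ ∑' k : ℕ, C * (ε * ‖z‖) ^ k / (Nat.factorial k : ℝ) := by
        exact Summable.tsum_le_tsum hterm
          (Summable.of_nonneg_of_le (fun k => norm_nonneg _) hterm hsum) hsum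
    _ = C * Real.exp (ε * ‖z‖) := by
        rw [Real.exp_eq_exp_ℝ, NormedSpace.exp_eq_tsum_div]
        simp_rw [mul_div_assoc]
        exact tsum_mul_left

lemma Pdiff (c : ℕ → ℂ) (hc : ExpTypeZero c) :
    Differentiable ℂ (fun z : ℂ => ∑' k : ℕ, c k / (Nat.factorial k : ℂ) * z ^ k) := by
  obtain ⟨C, hC, hCb⟩ := hc 1 one_pos
  intro z
  have hR : z ∈ Metric.ball (0 : ℂ) (‖z‖ + 1) := by
    rw [Metric.mem_ball, dist_zero_right]
    linarith
  have hd : DifferentiableOn ℂ (fun w : ℂ => ∑' k : ℕ, c k / (Nat.factorial k : ℂ) * w ^ k)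
      (Metric.ball (0 : ℂ) (‖z‖ + 1)) := by
    apply Complex.differentiableOn_tsum_of_summable_norm
      (u := fun k : ℕ => C * (‖z‖ + 1) ^ k / (Nat.factorial k : ℝ))
    · have := (Real.summable_pow_div_factorial (‖z‖ + 1)).mul_left C
      simpa [mul_div_assoc] using this
    · intro k
      exact ((differentiable_pow k).const_mul _).differentiableOn
    · exact Metric.isOpen_ball
    · intro k w hw
      have hw' : ‖w‖ ≤ ‖z‖ + 1 := by
        simpa [Complex.dist_eq] using (Metric.mem_ball.mp hw).le
      rw [norm_mul, norm_div, norm_pow, Complex.norm_natCast, div_mul_eq_mul_div]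
      have hck : ‖c k‖ ≤ C := by
        simpa using hCb k
      have hwk : ‖w‖ ^ k ≤ (‖z‖ + 1) ^ k :=
        pow_le_pow_left₀ (norm_nonneg w) hw' k
      have hfac : (0 : ℝ) < (Nat.factorial k : ℝ) := by positivity
      gcongr
  exact hd.differentiableAt (Metric.isOpen_ball.mem_nhds hR)

lemma special_mem (a b : ℝ) (hab : a ≤ b) {m : ℕ} (hm : 1 ≤ m) :
    ((a - 2 : ℝ) : ℂ) ∈ Sreg a b m := by
  have hm' : (1 : ℝ) ≤ m := by exact_mod_cast hm
  constructor
  · simp only [Complex.ofReal_im, abs_zero]; linarith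
  · have h2 : (2 : ℝ) ≤ Metric.infDist (((a - 2 : ℝ) : ℂ)) (seg a b) := by
      by_contra h
      push_neg at h
      have hsne : (seg a b).Nonempty := ⟨(a : ℂ), ⟨a, ⟨le_refl a, hab⟩, rfl⟩⟩
      obtain ⟨y, hy, hdy⟩ := (Metric.infDist_lt_iff hsne).mp h
      obtain ⟨x, hx, rfl⟩ := hy
      rw [Complex.dist_eq] at hdy
      have habs : ‖((a - 2 : ℝ) : ℂ) - (x : ℂ)‖ = |a - 2 - x| := by
        rw [← Complex.ofReal_sub, Complex.norm_real, Real.norm_eq_abs]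
      rw [habs] at hdy
      have h2' : 2 ≤ |a - 2 - x| := le_abs.mpr (Or.inr (by linarith [hx.1]))
      linarith
    have h1 : 1 / (m : ℝ) ≤ 1 := by
      rw [div_le_one (by linarith)]; exact hm'
    linarith

lemma wnorm_nonneg' {E : Type*} [NormedAddCommGroup E] (a b : ℝ) (hab : a ≤ b)
    (m : ℕ) (hm : 1 ≤ m) (F : ℂ → E)
    (hbdd : BddAbove ((fun z => ‖F z‖ * Real.exp (-|z.re| / m)) '' Sreg a b m)) :
    0 ≤ wnorm a b m F := by
  have hz : ((a - 2 : ℝ) : ℂ) ∈ Sreg a b m := special_mem a b hab hm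
  calc (0 : ℝ) ≤ ‖F ((a - 2 : ℝ) : ℂ)‖ *
        Real.exp (-|(((a - 2 : ℝ) : ℂ)).re| / m) := by positivity
    _ ≤ wnorm a b m F := le_csSup hbdd ⟨_, hz, rfl⟩

lemma Sreg_subset_two (a b : ℝ) {n : ℕ} (hn : 1 ≤ n) : Sreg a b n ⊆ Sreg a b (2 * n) := by
  intro z hz
  obtain ⟨h1, h2⟩ := hz
  have hn' : (1 : ℝ) ≤ n := by exact_mod_cast hn
  constructor
  · push_cast; linarith
  · have hlt : 1 / ((2 * n : ℕ) : ℝ) < 1 / (n : ℝ) := by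
      push_cast
      rw [div_lt_div_iff₀ (by linarith) (by linarith)]
      nlinarith
    exact lt_trans hlt h2

/-- Multiplication by the entire function `P(z) = Σ (c_k/k!) z^k` of exponential type `0`
maps slowly increasing holomorphic functions on `ℂ ∖ [a,b]` to slowly increasing holomorphic
functions, with `⦀P·F⦀_n ≤ C·⦀F⦀_{2n}` for a constant `C` depending only on `n` and on the
coefficient sequence. -/
theorem stmt12 {E : Type*} [NormedAddCommGroup E] [NormedSpace ℂ E] [CompleteSpace E]
    (a b : ℝ) (hab : a ≤ b) (c : ℕ → ℂ) (hc : ExpTypeZero c) :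
    (∀ F : ℂ → E, SlowlyIncreasing a b F →
      SlowlyIncreasing a b fun z =>
        (∑' k : ℕ, c k / (Nat.factorial k : ℂ) * z ^ k) • F z) ∧
    ∀ n : ℕ, 1 ≤ n → ∃ C : ℝ, 0 < C ∧ ∀ F : ℂ → E, SlowlyIncreasing a b F →
      wnorm a b n (fun z => (∑' k : ℕ, c k / (Nat.factorial k : ℂ) * z ^ k) • F z) ≤
        C * wnorm a b (2 * n) F := by
  set P : ℂ → ℂ := fun z => ∑' k : ℕ, c k / (Nat.factorial k : ℂ) * z ^ k with hP
  have main : ∀ n : ℕ, 1 ≤ n → ∃ C : ℝ, 0 < C ∧ ∀ F : ℂ → E, SlowlyIncreasing a b F →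
      ∀ z ∈ Sreg a b n,
        ‖P z • F z‖ * Real.exp (-|z.re| / n) ≤ C * wnorm a b (2 * n) F := by
    intro n hn
    have hN : (1 : ℝ) ≤ (n : ℝ) := by exact_mod_cast hn
    have hN0 : (0 : ℝ) < (n : ℝ) := by linarith
    have hε : (0 : ℝ) < 1 / (2 * (n : ℝ)) := by positivity
    obtain ⟨C₀, hC₀, hCb⟩ := hc (1 / (2 * (n : ℝ))) hε
    refine ⟨C₀ * Real.exp (1 / 2), by positivity, ?_⟩
    intro F hF z hz
    have hz2 : z ∈ Sreg a b (2 * n) := Sreg_subset_two a b hn hz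
    have hPz : ‖P z‖ ≤ C₀ * Real.exp (‖z‖ / (2 * (n : ℝ))) := by
      have := Pnorm_le c hε hC₀ hCb z
      rwa [div_mul_eq_mul_div, one_mul] at this
    have hzre : ‖z‖ ≤ |z.re| + (n : ℝ) := by
      have := Complex.norm_le_abs_re_add_abs_im z
      linarith [hz.1.le]
    have h2N : (0 : ℝ) < 2 * (n : ℝ) := by linarith
    have he : Real.exp (‖z‖ / (2 * (n : ℝ))) * Real.exp (-|z.re| / (n : ℝ)) ≤
        Real.exp (1 / 2) * Real.exp (-|z.re| / (2 * (n : ℝ))) := by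
      rw [← Real.exp_add, ← Real.exp_add]
      apply Real.exp_le_exp.mpr
      have e1 : ‖z‖ / (2 * (n : ℝ)) + -|z.re| / (n : ℝ) =
          (‖z‖ - 2 * |z.re|) / (2 * (n : ℝ)) := by field_simp; ring
      have e2 : 1 / 2 + -|z.re| / (2 * (n : ℝ)) =
          ((n : ℝ) - |z.re|) / (2 * (n : ℝ)) := by field_simp; ring
      rw [e1, e2, div_le_div_iff₀ h2N h2N]
      nlinarith
    have hmem : ‖F z‖ * Real.exp (-|z.re| / ((2 * n : ℕ) : ℝ)) ≤ wnorm a b (2 * n) F :=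
      le_csSup (hF.2 (2 * n) (by omega)) ⟨z, hz2, rfl⟩
    have hcast : ((2 * n : ℕ) : ℝ) = 2 * (n : ℝ) := by push_cast; ring
    rw [hcast] at hmem
    calc ‖P z • F z‖ * Real.exp (-|z.re| / (n : ℝ))
        = ‖P z‖ * ‖F z‖ * Real.exp (-|z.re| / (n : ℝ)) := by rw [norm_smul]
      _ ≤ (C₀ * Real.exp (‖z‖ / (2 * (n : ℝ)))) * ‖F z‖ *
            Real.exp (-|z.re| / (n : ℝ)) := by gcongr
      _ = (C₀ * ‖F z‖) * (Real.exp (‖z‖ / (2 * (n : ℝ))) *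
            Real.exp (-|z.re| / (n : ℝ))) := by ring
      _ ≤ (C₀ * ‖F z‖) * (Real.exp (1 / 2) *
            Real.exp (-|z.re| / (2 * (n : ℝ)))) := by
          apply mul_le_mul_of_nonneg_left he (by positivity)
      _ = (C₀ * Real.exp (1 / 2)) *
            (‖F z‖ * Real.exp (-|z.re| / (2 * (n : ℝ)))) := by ring
      _ ≤ (C₀ * Real.exp (1 / 2)) * wnorm a b (2 * n) F := by
          apply mul_le_mul_of_nonneg_left hmem (by positivity)
  constructor
  · intro F hF
    constructor
    · exact ((Pdiff c hc).differentiableOn).smul hF.1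
    · intro n hn
      obtain ⟨C, hC, hbound⟩ := main n hn
      exact ⟨C * wnorm a b (2 * n) F, by rintro y ⟨z, hz, rfl⟩; exact hbound F hF z hz⟩
  · intro n hn
    obtain ⟨C, hC, hbound⟩ := main n hn
    refine ⟨C, hC, ?_⟩
    intro F hF
    apply Real.sSup_le
    · rintro x ⟨z, hz, rfl⟩
      exact hbound F hF z hz
    · exact mul_nonneg hC.le
        (wnorm_nonneg' a b hab (2 * n) (by omega) F (hF.2 (2 * n) (by omega)))

end
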